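/- The set X(0) of strings over {0,1} (with infinitely many 0s and infinitely many 1s) whose maximal blocks of consecutive 0s have uniformly bounded length is upward closed under quasi-isometric reducibility: if α ∈ X(0) and there is a quasi-isometry from α to β, then β ∈ X(0). -/

import Mathlib

def IsQI {Γ : Type*} (α β : ℕ → Γ) (f : ℕ → ℕ) (A B : ℝ) : Prop :=
  1 ≤ A ∧ 0 ≤ B ∧ (∀ n, α n = β (f n)) ∧
  (∀ x y : ℕ, (1 / A) * |(x : ℝ) - (y : ℝ)| - B ≤ |(f x : ℝ) - (f y : ℝ)| ∧
      |(f x : ℝ) - (f y : ℝ)| ≤ A * |(x : ℝ) - (y : ℝ)| + B) ∧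
  (∀ m : ℕ, ∃ x : ℕ, |(m : ℝ) - (f x : ℝ)| ≤ A)

/-- `α ≤_QI β`: there is a quasi-isometry from `α` to `β`. -/
def QI {Γ : Type*} (α β : ℕ → Γ) : Prop := ∃ f A B, IsQI α β f A B

/-- `α ∈ X(0)`: the lengths of intervals of consecutive positions coloured `0` are
uniformly bounded. -/
def memX0 (α : ℕ → Fin 2) : Prop := ∃ K : ℕ, ∀ i len : ℕ, (∀ j < len, α (i + j) = 0) → len ≤ K

/-!
A quasi-isometry `f` tends to infinity, so it carries the infinitely many `0`s and `1`s of `α`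
to infinitely many `0`s and `1`s of `β`. Bounded `0`-blocks in `α` mean that a `1` follows every
position within `K` steps. Every position of `β` lies within `A` of some `f x`, and the `1` of `α`
at most `K` after `x` is sent to a `1` of `β` within `A * K + B` of `f x`. So every position of `β`
has a `1` at bounded distance, which bounds the `0`-blocks of `β`.
-/

open Filter

namespace IsQI

variable {Γ : Type*} {α β : ℕ → Γ} {f : ℕ → ℕ} {A B : ℝ}

lemma one_le (hf : IsQI α β f A B) : 1 ≤ A := hf.1

lemma apply_eq (hf : IsQI α β f A B) (n : ℕ) : α n = β (f n) := hf.2.2.1 n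

lemma div_sub_le_dist (hf : IsQI α β f A B) (x y : ℕ) :
    dist x y / A - B ≤ dist (f x) (f y) := by
  rw [Nat.dist_eq, Nat.dist_eq, ← one_div_mul_eq_div]
  exact (hf.2.2.2.1 x y).1

lemma dist_le (hf : IsQI α β f A B) (x y : ℕ) : dist (f x) (f y) ≤ A * dist x y + B :=
  (hf.2.2.2.1 x y).2

lemma exists_dist_le (hf : IsQI α β f A B) (m : ℕ) : ∃ x, dist m (f x) ≤ A :=
  hf.2.2.2.2 m

lemma tendsto_atTop (hf : IsQI α β f A B) : Tendsto f atTop atTop := by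
  have hA : 0 < A := zero_lt_one.trans_le hf.one_le
  have hlower (x : ℕ) : (x : ℝ) / A - B - f 0 ≤ f x := by
    have h := hf.div_sub_le_dist x 0
    rw [Nat.dist_eq, Nat.dist_eq, Nat.cast_zero, sub_zero, Nat.abs_cast] at h
    have hfx : |(f x : ℝ) - f 0| ≤ f x + f 0 := by
      simpa only [Nat.abs_cast] using abs_sub (f x : ℝ) (f 0)
    linarith
  refine tendsto_natCast_atTop_iff.mp (tendsto_atTop_mono hlower ?_)
  exact tendsto_atTop_add_const_right _ _
    (tendsto_atTop_add_const_right _ _ (tendsto_natCast_atTop_atTop.atTop_div_const hA))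

lemma frequently_eq (hf : IsQI α β f A B) {c : Γ} (h : ∃ᶠ n in atTop, α n = c) :
    ∃ᶠ m in atTop, β m = c :=
  hf.tendsto_atTop.frequently (h.mono fun n hn => hf.apply_eq n ▸ hn)

end IsQI

lemma memX0.exists_add_eq_one {α : ℕ → Fin 2} (hα : memX0 α) :
    ∃ K : ℕ, ∀ x, ∃ j ≤ K, α (x + j) = 1 := by
  obtain ⟨K, hK⟩ := hα
  refine ⟨K, fun x => ?_⟩
  by_contra! h
  have := hK x (K + 1) fun j hj => by
    by_contra hne
    exact h j (Nat.lt_succ_iff.mp hj) (Fin.eq_one_of_ne_zero _ hne)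
  omega

lemma memX0_of_forall_exists_dist_le {α : ℕ → Fin 2} (D : ℝ)
    (h : ∀ m, ∃ k, dist m k ≤ D ∧ α k = 1) : memX0 α := by
  set d := ⌈D⌉₊
  refine ⟨2 * d + 1, fun i len hzero => ?_⟩
  by_contra! hlen
  obtain ⟨k, hdist, hk⟩ := h (i + d)
  have hk' : |((i + d : ℕ) : ℤ) - k| ≤ d := by
    rw [Nat.dist_eq] at hdist
    rw [← Int.cast_le (R := ℝ)]
    push_cast at hdist ⊢
    exact hdist.trans (Nat.le_ceil D)
  obtain ⟨hk_ge, hk_le⟩ := abs_le.mp hk'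
  have := hzero (k - i) (by omega)
  rw [Nat.add_sub_cancel' (by omega), hk] at this
  exact absurd this (by decide)

lemma IsQI.exists_dist_le_eq_one {α β : ℕ → Fin 2} {f : ℕ → ℕ} {A B : ℝ}
    (hf : IsQI α β f A B) (hα : memX0 α) : ∃ D : ℝ, ∀ m, ∃ k, dist m k ≤ D ∧ β k = 1 := by
  obtain ⟨K, hK⟩ := hα.exists_add_eq_one
  refine ⟨A + (A * K + B), fun m => ?_⟩
  obtain ⟨x, hx⟩ := hf.exists_dist_le m
  obtain ⟨j, hjK, hj⟩ := hK x
  refine ⟨f (x + j), ?_, hf.apply_eq _ ▸ hj⟩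
  have hjx : dist x (x + j) ≤ K := by
    rw [Nat.dist_eq]
    simpa using hjK
  calc dist m (f (x + j)) ≤ dist m (f x) + dist (f x) (f (x + j)) := dist_triangle _ _ _
    _ ≤ A + (A * K + B) := by
      gcongr
      exact (hf.dist_le x (x + j)).trans (by gcongr; linarith [hf.one_le])

/-- `X(0)` is upward closed under quasi-isometric reducibility (on strings with
infinitely many 0s and infinitely many 1s). -/
theorem X0_upward_closed (α β : ℕ → Fin 2)
    (hα0 : ∀ N, ∃ i, N < i ∧ α i = 0) (hα1 : ∀ N, ∃ i, N < i ∧ α i = 1)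
    (hX : memX0 α) (h : QI α β) :
    (∀ N, ∃ i, N < i ∧ β i = 0) ∧ (∀ N, ∃ i, N < i ∧ β i = 1) ∧ memX0 β := by
  obtain ⟨f, A, B, hf⟩ := h
  obtain ⟨D, hD⟩ := hf.exists_dist_le_eq_one hX
  exact ⟨frequently_atTop'.mp (hf.frequently_eq (frequently_atTop'.mpr hα0)),
    frequently_atTop'.mp (hf.frequently_eq (frequently_atTop'.mpr hα1)),
    memX0_of_forall_exists_dist_le D hD⟩
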